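/- Let X be a complex Banach space and A a positive operator on X. Define Λ₁ on X × X × X with domain D(A) × D(A) × D(A) by Λ₁(u,v,w) = (Au, Av, u + Aw); Λ₁ is then a positive operator on X × X × X. For every α ∈ (0,1), the Balakrishnan integral Λ₁^{-α} = (sin(πα)/π) ∫₀^∞ s^{-α}(s+Λ₁)^{-1} ds satisfies Λ₁^{-α}(x,y,z) = (A^{-α}x, A^{-α}y, −α·A^{-1}(A^{-α}x) + A^{-α}z) for all (x,y,z) ∈ X × X × X, where A^{-α} = (sin(πα)/π) ∫₀^∞ s^{-α}(s+A)^{-1} ds and A^{-1} = (0+A)^{-1}. -/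

import Mathlib

open MeasureTheory Real Set

noncomputable section

/-- `R` is a two-sided bounded inverse of `lam + A : D(A) → X`;
in particular `lam + A` is bijective from `D(A)` onto `X` with bounded inverse `R`. -/
def ResolventAt {X : Type*} [NormedAddCommGroup X] [NormedSpace ℂ X]
    (A : X →ₗ.[ℂ] X) (lam : ℂ) (R : X →L[ℂ] X) : Prop :=
  (∀ x : A.domain, R (lam • (x : X) + A x) = x) ∧
  (∀ y : X, ∃ h : R y ∈ A.domain, lam • R y + A ⟨R y, h⟩ = y)

/-- `A` is a positive operator with constant `M ≥ 1` and resolvent family `R`. -/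
structure IsPositive {X : Type*} [NormedAddCommGroup X] [NormedSpace ℂ X]
    (A : X →ₗ.[ℂ] X) (M : ℝ) (R : ℝ → X →L[ℂ] X) : Prop where
  dense_domain : Dense (A.domain : Set X)
  closed_graph : IsClosed (A.graph : Set (X × X))
  one_le : 1 ≤ M
  resolvent : ∀ s : ℝ, 0 ≤ s → ResolventAt A (s : ℂ) (R s)
  bound : ∀ s : ℝ, 0 ≤ s → (1 + s) * ‖R s‖ ≤ M

/-- The Balakrishnan fractional power `A ^ (-α)`, expressed through the
resolvent family `R` of `A`:  `A⁻ᵅ = (sin (π α) / π) ∫₀^∞ s⁻ᵅ (s+A)⁻¹ ds`. -/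
def negPow {X : Type*} [NormedAddCommGroup X] [NormedSpace ℂ X]
    (R : ℝ → X →L[ℂ] X) (α : ℝ) : X →L[ℂ] X :=
  (Real.sin (π * α) / π) • ∫ s in Ioi (0 : ℝ), s ^ (-α) • R s

/-- The bounded operator on `X × X × X` given (for the resolvent family `R` of `A`) by
`(x, y, z) ↦ ((s+A)⁻¹ x, (s+A)⁻¹ y, -(s+A)⁻² x + (s+A)⁻¹ z)`,
i.e. the claimed inverse of `s + Λ₁`. -/
def invL {X : Type*} [NormedAddCommGroup X] [NormedSpace ℂ X]
    (R : ℝ → X →L[ℂ] X) (s : ℝ) : (X × X × X) →L[ℂ] (X × X × X) :=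
  ((R s).comp (ContinuousLinearMap.fst ℂ X (X × X))).prod
    (((R s).comp ((ContinuousLinearMap.fst ℂ X X).comp
        (ContinuousLinearMap.snd ℂ X (X × X)))).prod
      (-((R s).comp ((R s).comp (ContinuousLinearMap.fst ℂ X (X × X)))) +
        (R s).comp ((ContinuousLinearMap.snd ℂ X X).comp
          (ContinuousLinearMap.snd ℂ X (X × X)))))

/-!
Apart from the extra term `-(s+A)⁻² x` in its third component, `invL R s` acts by `(s+A)⁻¹` on
each component, so the integral can be computed componentwise and everything reduces to
`∫₀^∞ s⁻ᵅ (s+A)⁻² ds = α A⁻¹ ∫₀^∞ s⁻ᵅ (s+A)⁻¹ ds`. By the resolvent identity,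
`d/dt (t+A)⁻¹ = -(t+A)⁻²` and `G t := t⁻ᵅ ((t+A)⁻¹ - A⁻¹) = -t¹⁻ᵅ A⁻¹ (t+A)⁻¹`, so `G` vanishes
at `0` and at `∞` while `G' t = t⁻ᵅ (α A⁻¹ (t+A)⁻¹ - (t+A)⁻²)`; the identity is the fundamental
theorem of calculus for `G` on `(0, ∞)`.
-/

open Filter Topology

theorem integrableOn_rpow_neg_div_one_add {α : ℝ} (hα : α ∈ Ioo (0 : ℝ) 1) :
    IntegrableOn (fun s : ℝ => s ^ (-α) / (1 + s)) (Ioi 0) := by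
  have hcont : ContinuousOn (fun s : ℝ => s ^ (-α) / (1 + s)) (Ioi 0) := fun s (hs : 0 < s) =>
    ((continuousAt_rpow_const s (-α) (Or.inl hs.ne')).div (by fun_prop)
      (by positivity)).continuousWithinAt
  have hnonneg : ∀ s ∈ Ioi (0 : ℝ), 0 ≤ s ^ (-α) / (1 + s) := fun s (hs : 0 < s) => by positivity
  rw [← Ioc_union_Ioi_eq_Ioi zero_le_one]
  refine IntegrableOn.union ?_ ?_
  · refine Integrable.mono' (intervalIntegral.intervalIntegrable_rpow' (a := 0) (b := 1) (r := -α)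
      (by linarith [hα.2])).1 ((hcont.mono Ioc_subset_Ioi_self).aestronglyMeasurable
      measurableSet_Ioc) (ae_restrict_of_forall_mem measurableSet_Ioc fun s hs => ?_)
    rw [norm_of_nonneg (hnonneg s hs.1)]
    exact div_le_self (rpow_nonneg hs.1.le _) (by linarith [hs.1])
  · have hsub : Ioi (1 : ℝ) ⊆ Ioi 0 := Ioi_subset_Ioi zero_le_one
    refine Integrable.mono' (integrableOn_Ioi_rpow_of_lt (a := -α - 1) (by linarith [hα.1]) one_pos)
      ((hcont.mono hsub).aestronglyMeasurable measurableSet_Ioi)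
      (ae_restrict_of_forall_mem measurableSet_Ioi fun s (hs : 1 < s) => ?_)
    have hs0 : 0 < s := zero_lt_one.trans hs
    rw [norm_of_nonneg (hnonneg s hs0), rpow_sub_one hs0.ne']
    exact div_le_div_of_nonneg_left (rpow_nonneg hs0.le _) hs0 (by linarith)

theorem integrableOn_rpow_smul_of_norm_le_div {E : Type*} [NormedAddCommGroup E]
    [NormedSpace ℝ E] {F : ℝ → E} {α C : ℝ} (hα : α ∈ Ioo (0 : ℝ) 1)
    (hF : ContinuousOn F (Ioi 0)) (hbound : ∀ s ∈ Ioi (0 : ℝ), ‖F s‖ ≤ C / (1 + s)) :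
    IntegrableOn (fun s : ℝ => s ^ (-α) • F s) (Ioi 0) := by
  have hpow : ContinuousOn (fun s : ℝ => s ^ (-α)) (Ioi 0) :=
    continuousOn_id.rpow_const fun s (hs : 0 < s) => Or.inl hs.ne'
  refine Integrable.mono' ((integrableOn_rpow_neg_div_one_add hα).const_mul C)
    ((hpow.smul hF).aestronglyMeasurable measurableSet_Ioi)
    (ae_restrict_of_forall_mem measurableSet_Ioi fun s (hs : 0 < s) => ?_)
  calc ‖s ^ (-α) • F s‖ = s ^ (-α) * ‖F s‖ := by
        rw [norm_smul, norm_of_nonneg (rpow_nonneg hs.le _)]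
    _ ≤ s ^ (-α) * (C / (1 + s)) := by gcongr; exact hbound s hs
    _ = C * (s ^ (-α) / (1 + s)) := by ring

section

variable {X : Type*} [NormedAddCommGroup X] [NormedSpace ℂ X]

theorem ResolventAt.sub_eq_smul_comp {A : X →ₗ.[ℂ] X} {l m : ℂ} {Rl Rm : X →L[ℂ] X}
    (hl : ResolventAt A l Rl) (hm : ResolventAt A m Rm) :
    Rm - Rl = (l - m) • Rl.comp Rm := by
  ext y
  obtain ⟨hy, hAy⟩ := hm.2 y
  have hshift : l • Rm y + A ⟨Rm y, hy⟩ = (l - m) • Rm y + y :=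
    calc l • Rm y + A ⟨Rm y, hy⟩ = (l - m) • Rm y + (m • Rm y + A ⟨Rm y, hy⟩) := by
          rw [sub_smul]; abel
      _ = (l - m) • Rm y + y := by rw [hAy]
  have h := hl.1 ⟨Rm y, hy⟩
  simp only at h
  rw [hshift, map_add, map_smul] at h
  exact sub_eq_of_eq_add h.symm

namespace IsPositive

variable {M : ℝ} {A : X →ₗ.[ℂ] X} {R : ℝ → X →L[ℂ] X}

theorem resolvent_sub (hA : IsPositive A M R) {s t : ℝ} (hs : 0 ≤ s) (ht : 0 ≤ t) :
    R t - R s = (s - t) • (R s).comp (R t) := by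
  rw [(hA.resolvent s hs).sub_eq_smul_comp (hA.resolvent t ht), ← Complex.ofReal_sub,
    Complex.coe_smul]

theorem norm_le_div (hA : IsPositive A M R) {s : ℝ} (hs : 0 ≤ s) : ‖R s‖ ≤ M / (1 + s) := by
  rw [le_div_iff₀ (by linarith), mul_comm]
  exact hA.bound s hs

theorem norm_le (hA : IsPositive A M R) {s : ℝ} (hs : 0 ≤ s) : ‖R s‖ ≤ M :=
  (hA.norm_le_div hs).trans (div_le_self (zero_le_one.trans hA.one_le) (by linarith))

theorem norm_comp_le (hA : IsPositive A M R) {s t : ℝ} (hs : 0 ≤ s) (ht : 0 ≤ t) :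
    ‖(R s).comp (R t)‖ ≤ M * M / (1 + t) := by
  calc ‖(R s).comp (R t)‖ ≤ ‖R s‖ * ‖R t‖ := (R s).opNorm_comp_le (R t)
    _ ≤ M * (M / (1 + t)) :=
      mul_le_mul (hA.norm_le hs) (hA.norm_le_div ht) (norm_nonneg _)
        (zero_le_one.trans hA.one_le)
    _ = M * M / (1 + t) := by ring

theorem continuousOn (hA : IsPositive A M R) : ContinuousOn R (Ici 0) := by
  have hM : 0 ≤ M * M := mul_self_nonneg M
  refine (LipschitzOnWith.of_dist_le_mul fun s (hs : 0 ≤ s) t (ht : 0 ≤ t) => ?_ :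
    LipschitzOnWith (M * M).toNNReal R (Ici 0)).continuousOn
  rw [dist_eq_norm, hA.resolvent_sub ht hs, norm_smul, Real.coe_toNNReal _ hM, Real.dist_eq,
    Real.norm_eq_abs, abs_sub_comm, mul_comm]
  gcongr
  exact (hA.norm_comp_le ht hs).trans (div_le_self hM (by linarith))

theorem hasDerivAt (hA : IsPositive A M R) {s : ℝ} (hs : 0 < s) :
    HasDerivAt R (-(R s).comp (R s)) s := by
  rw [hasDerivAt_iff_tendsto_slope]
  have hslope : ∀ᶠ t in 𝓝[≠] s, -(R s).comp (R t) = slope R s t := by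
    filter_upwards [self_mem_nhdsWithin, nhdsWithin_le_nhds (Ioi_mem_nhds hs)]
      with t (hts : t ≠ s) (ht : 0 < t)
    rw [slope_def_module, hA.resolvent_sub hs.le ht.le, smul_smul, ← neg_sub t s,
      mul_neg, inv_mul_cancel₀ (sub_ne_zero.2 hts), neg_one_smul]
  have hR : ContinuousAt R s := hA.continuousOn.continuousAt (Ici_mem_nhds hs)
  exact ((continuousAt_const.clm_comp hR).neg.tendsto.mono_left nhdsWithin_le_nhds).congr' hslope

theorem integrableOn_rpow_smul (hA : IsPositive A M R) {α : ℝ} (hα : α ∈ Ioo (0 : ℝ) 1) :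
    IntegrableOn (fun s : ℝ => s ^ (-α) • R s) (Ioi 0) :=
  integrableOn_rpow_smul_of_norm_le_div hα (hA.continuousOn.mono Ioi_subset_Ici_self)
    fun _ hs => hA.norm_le_div (le_of_lt hs)

theorem integrableOn_rpow_smul_comp (hA : IsPositive A M R) {α : ℝ} (hα : α ∈ Ioo (0 : ℝ) 1)
    {t : ℝ} (ht : 0 ≤ t) :
    IntegrableOn (fun s : ℝ => s ^ (-α) • (R t).comp (R s)) (Ioi 0) :=
  integrableOn_rpow_smul_of_norm_le_div hα
    (continuousOn_const.clm_comp (hA.continuousOn.mono Ioi_subset_Ici_self))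
    fun _ hs => hA.norm_comp_le ht (le_of_lt hs)

theorem integrableOn_rpow_smul_comp_self (hA : IsPositive A M R) {α : ℝ}
    (hα : α ∈ Ioo (0 : ℝ) 1) :
    IntegrableOn (fun s : ℝ => s ^ (-α) • (R s).comp (R s)) (Ioi 0) :=
  integrableOn_rpow_smul_of_norm_le_div hα
    ((hA.continuousOn.mono Ioi_subset_Ici_self).clm_comp
      (hA.continuousOn.mono Ioi_subset_Ici_self))
    fun _ hs => hA.norm_comp_le (le_of_lt hs) (le_of_lt hs)

theorem rpow_smul_sub_resolvent_zero (hA : IsPositive A M R) {α t : ℝ} (hα : α < 1)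
    (ht : 0 ≤ t) : t ^ (-α) • (R t - R 0) = -(t ^ (1 - α) • (R 0).comp (R t)) := by
  rw [hA.resolvent_sub le_rfl ht, zero_sub, neg_smul, smul_neg, smul_smul,
    ← rpow_add_one' ht (by linarith), neg_add_eq_sub]

theorem hasDerivAt_rpow_smul_sub_resolvent_zero (hA : IsPositive A M R) (α : ℝ) {s : ℝ}
    (hs : 0 < s) :
    HasDerivAt (fun t : ℝ => t ^ (-α) • (R t - R 0))
      (α • (s ^ (-α) • (R 0).comp (R s)) - s ^ (-α) • (R s).comp (R s)) s := by
  have hpow : HasDerivAt (fun t : ℝ => t ^ (-α)) (-α * s ^ (-α - 1)) s := by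
    simpa using hasDerivAt_rpow_const (x := s) (p := -α) (Or.inl hs.ne')
  refine (hpow.smul ((hA.hasDerivAt hs).sub_const (R 0))).congr_deriv ?_
  rw [hA.resolvent_sub le_rfl hs.le, smul_smul, rpow_sub_one hs.ne', smul_neg, smul_smul]
  have hcoeff : -α * (s ^ (-α) / s) * (0 - s) = α * s ^ (-α) := by field_simp; ring
  rw [hcoeff]
  abel

theorem integral_rpow_smul_comp_self [CompleteSpace X] (hA : IsPositive A M R) {α : ℝ}
    (hα : α ∈ Ioo (0 : ℝ) 1) :
    ∫ s in Ioi (0 : ℝ), s ^ (-α) • (R s).comp (R s)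
      = α • (R 0).comp (∫ s in Ioi (0 : ℝ), s ^ (-α) • R s) := by
  set G : ℝ → X →L[ℂ] X := fun t => t ^ (-α) • (R t - R 0)
  have hG : ∀ t ∈ Ici (0 : ℝ), G t = -(t ^ (1 - α) • (R 0).comp (R t)) :=
    fun t ht => hA.rpow_smul_sub_resolvent_zero hα.2 ht
  have hG0 : G 0 = 0 := by
    simp [hG 0 self_mem_Ici, zero_rpow (by linarith [hα.2] : 1 - α ≠ 0)]
  have hcont : ContinuousWithinAt G (Ici 0) 0 :=
    ((((continuous_rpow_const (by linarith [hα.2] : 0 ≤ 1 - α)).continuousOn.smul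
      (continuousOn_const.clm_comp hA.continuousOn)).neg 0 self_mem_Ici).congr hG
      (hG 0 self_mem_Ici))
  have hlim : Tendsto G atTop (𝓝 0) := by
    refine squeeze_zero_norm' ?_
      (by simpa using (tendsto_rpow_neg_atTop hα.1).const_mul (M * M))
    filter_upwards [eventually_gt_atTop 0] with t ht
    rw [hG t ht.le, norm_neg, norm_smul, norm_of_nonneg (rpow_nonneg ht.le _)]
    calc t ^ (1 - α) * ‖(R 0).comp (R t)‖ ≤ t ^ (1 - α) * (M * M / (1 + t)) := by
          gcongr; exact hA.norm_comp_le le_rfl ht.le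
      _ = M * M * t ^ (-α) * (t / (1 + t)) := by
          rw [sub_eq_neg_add, rpow_add_one ht.ne']; ring
      _ ≤ M * M * t ^ (-α) :=
          mul_le_of_le_one_right (by have := mul_self_nonneg M; positivity)
            (div_le_one_of_le₀ (by linarith) (by positivity))
  have hR := hA.integrableOn_rpow_smul hα
  have hR0 := hA.integrableOn_rpow_smul_comp hα le_rfl
  have hRR := hA.integrableOn_rpow_smul_comp_self hα
  have hαR0 : IntegrableOn (fun s : ℝ => α • (s ^ (-α) • (R 0).comp (R s))) (Ioi 0) :=
    hR0.smul α
  have hftc := integral_Ioi_of_hasDerivAt_of_tendsto hcont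
    (fun s hs => hA.hasDerivAt_rpow_smul_sub_resolvent_zero α hs) (hαR0.sub hRR) hlim
  rw [hG0, sub_zero, integral_sub hαR0 hRR, integral_smul, sub_eq_zero] at hftc
  rw [← hftc]
  have hcomm := (ContinuousLinearMap.compL ℂ X X X (R 0)).integral_comp_comm hR
  simp only [ContinuousLinearMap.compL_apply, ContinuousLinearMap.comp_smul] at hcomm
  rw [hcomm]

end IsPositive

end

@[fun_prop]
theorem ContinuousOn.clm_prod {𝕜 α E F G : Type*} [NontriviallyNormedField 𝕜]
    [TopologicalSpace α] [SeminormedAddCommGroup E] [NormedSpace 𝕜 E]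
    [SeminormedAddCommGroup F] [NormedSpace 𝕜 F] [SeminormedAddCommGroup G] [NormedSpace 𝕜 G]
    {f : α → E →L[𝕜] F} {g : α → E →L[𝕜] G} {S : Set α} (hf : ContinuousOn f S)
    (hg : ContinuousOn g S) : ContinuousOn (fun x => (f x).prod (g x)) S :=
  (ContinuousLinearMap.prodₗᵢ 𝕜).continuous.comp_continuousOn (hf.prodMk hg)

section

variable {X : Type*} [NormedAddCommGroup X] [NormedSpace ℂ X]

@[simp]
theorem invL_apply (R : ℝ → X →L[ℂ] X) (s : ℝ) (p : X × X × X) :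
    invL R s p = (R s p.1, R s p.2.1, -R s (R s p.1) + R s p.2.2) := rfl

theorem norm_invL_le (R : ℝ → X →L[ℂ] X) (s : ℝ) : ‖invL R s‖ ≤ ‖R s‖ + ‖R s‖ * ‖R s‖ := by
  refine ContinuousLinearMap.opNorm_le_bound _ (by positivity) fun p => ?_
  have h1 : ‖p.1‖ ≤ ‖p‖ := norm_fst_le p
  have h21 : ‖p.2.1‖ ≤ ‖p‖ := (norm_fst_le p.2).trans (norm_snd_le p)
  have h22 : ‖p.2.2‖ ≤ ‖p‖ := (norm_snd_le p.2).trans (norm_snd_le p)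
  have hle : ‖R s‖ * ‖p‖ ≤ (‖R s‖ + ‖R s‖ * ‖R s‖) * ‖p‖ := by
    gcongr; exact le_add_of_nonneg_right (by positivity)
  rw [invL_apply, Prod.norm_def, Prod.norm_def]
  refine max_le (((R s).le_opNorm_of_le h1).trans hle)
    (max_le (((R s).le_opNorm_of_le h21).trans hle) ?_)
  calc ‖-R s (R s p.1) + R s p.2.2‖ ≤ ‖R s (R s p.1)‖ + ‖R s p.2.2‖ := by
        simpa only [norm_neg] using norm_add_le (-R s (R s p.1)) (R s p.2.2)
    _ ≤ ‖R s‖ * (‖R s‖ * ‖p‖) + ‖R s‖ * ‖p‖ :=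
        add_le_add ((R s).le_opNorm_of_le ((R s).le_opNorm_of_le h1))
          ((R s).le_opNorm_of_le h22)
    _ = (‖R s‖ + ‖R s‖ * ‖R s‖) * ‖p‖ := by ring

theorem continuousOn_invL {R : ℝ → X →L[ℂ] X} {S : Set ℝ} (hR : ContinuousOn R S) :
    ContinuousOn (invL R) S := by
  unfold invL
  fun_prop

theorem integral_smul_invL_apply [CompleteSpace X] {μ : Measure ℝ} {w : ℝ → ℝ}
    {R : ℝ → X →L[ℂ] X} (hR : Integrable (fun s => w s • R s) μ)
    (hRR : Integrable (fun s => w s • (R s).comp (R s)) μ)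
    (hinv : Integrable (fun s => w s • invL R s) μ) (p : X × X × X) :
    (∫ s, w s • invL R s ∂μ) p
      = ((∫ s, w s • R s ∂μ) p.1, (∫ s, w s • R s ∂μ) p.2.1,
          -(∫ s, w s • (R s).comp (R s) ∂μ) p.1 + (∫ s, w s • R s ∂μ) p.2.2) := by
  have h1 := hR.apply_continuousLinearMap p.1
  have h21 := hR.apply_continuousLinearMap p.2.1
  have h22 := hR.apply_continuousLinearMap p.2.2
  have h2 := hRR.apply_continuousLinearMap p.1
  simp only [smul_apply, ContinuousLinearMap.comp_apply] at h1 h21 h22 h2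
  simp only [ContinuousLinearMap.integral_apply hinv, ContinuousLinearMap.integral_apply hR,
    ContinuousLinearMap.integral_apply hRR, smul_apply, invL_apply,
    Prod.smul_mk, smul_add, smul_neg, ContinuousLinearMap.comp_apply]
  have h2' : Integrable (fun s => -(w s • R s (R s p.1))) μ := h2.neg
  have h3 : Integrable (fun s => -(w s • R s (R s p.1)) + w s • R s p.2.2) μ := h2'.add h22
  rw [integral_pair h1 (h21.prodMk h3), integral_pair h21 h3, integral_add h2' h22,
    integral_neg]

theorem IsPositive.integrableOn_rpow_smul_invL {M : ℝ} {A : X →ₗ.[ℂ] X} {R : ℝ → X →L[ℂ] X}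
    (hA : IsPositive A M R) {α : ℝ} (hα : α ∈ Ioo (0 : ℝ) 1) :
    IntegrableOn (fun s : ℝ => s ^ (-α) • invL R s) (Ioi 0) := by
  have hM : 0 ≤ M := zero_le_one.trans hA.one_le
  refine integrableOn_rpow_smul_of_norm_le_div (C := M + M * M) hα
    (continuousOn_invL (hA.continuousOn.mono Ioi_subset_Ici_self)) fun s (hs : 0 < s) => ?_
  calc ‖invL R s‖ ≤ ‖R s‖ + ‖R s‖ * ‖R s‖ := norm_invL_le R s
    _ ≤ M / (1 + s) + M * (M / (1 + s)) := by
        gcongr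
        · exact hA.norm_le_div hs.le
        · exact hA.norm_le hs.le
        · exact hA.norm_le_div hs.le
    _ = (M + M * M) / (1 + s) := by ring

end

/-- the Balakrishnan integral for `Λ₁` exists and, componentwise,
`Λ₁⁻ᵅ (x,y,z) = (A⁻ᵅ x, A⁻ᵅ y, -α A⁻¹ (A⁻ᵅ x) + A⁻ᵅ z)`. -/
theorem stmt12 {X : Type*} [NormedAddCommGroup X] [NormedSpace ℂ X] [CompleteSpace X]
    (M : ℝ) (A : X →ₗ.[ℂ] X) (R : ℝ → X →L[ℂ] X) (hA : IsPositive A M R)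
    (α : ℝ) (hα : α ∈ Ioo (0 : ℝ) 1) :
    IntegrableOn (fun s : ℝ => s ^ (-α) • invL R s) (Ioi 0) ∧
    ∀ p : X × X × X,
      ((Real.sin (π * α) / π) • ∫ s in Ioi (0 : ℝ), s ^ (-α) • invL R s) p
        = (negPow R α p.1, negPow R α p.2.1,
            -(α • (R 0) (negPow R α p.1)) + negPow R α p.2.2) := by
  have hinv := hA.integrableOn_rpow_smul_invL hα
  refine ⟨hinv, fun p => ?_⟩
  rw [smul_apply, integral_smul_invL_apply (hA.integrableOn_rpow_smul hα)
    (hA.integrableOn_rpow_smul_comp_self hα) hinv p, hA.integral_rpow_smul_comp_self hα]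
  simp [negPow, smul_comm _ α]
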